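/- arXiv:1903.03771 — 6 statements merged into one kernel-verified Lean document; each statement's English description precedes it below -/
import Mathlib

section
/- Let ⊢ be a logic without antitheorems. Then ⊢^{rl} is a sublogic of ⊢^{•} for every (possibly empty) sequence • of left/right companion operations, i.e., ⊢^{rl} ≤ ⊢^{•}. -/
open FirstOrder Language

/-- The set of variables occurring in a formula (term). -/
def tvars {L : FirstOrder.Language} (t : L.Term ℕ) : Set ℕ := ↑t.varFinset

/-- The set of variables occurring in a set of formulas. -/
def svars {L : FirstOrder.Language} (Γ : Set (L.Term ℕ)) : Set ℕ := ⋃ γ ∈ Γ, tvars γ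

/-- Consequence relations over the formula algebra of `L`. -/
abbrev ConsRel (L : FirstOrder.Language) := Set (L.Term ℕ) → L.Term ℕ → Prop

/-- The image of a set of formulas under a substitution. -/
def substSet {L : FirstOrder.Language} (σ : ℕ → L.Term ℕ) (Γ : Set (L.Term ℕ)) :
    Set (L.Term ℕ) := (fun t => t.subst σ) '' Γ

/-- A logic: a substitution-invariant consequence relation (reflexive, monotone,
satisfying cut, and substitution invariant). -/
def IsLogic {L : FirstOrder.Language} (C : ConsRel L) : Prop :=
  (∀ Γ φ, φ ∈ Γ → C Γ φ) ∧
  (∀ Γ Δ φ, Γ ⊆ Δ → C Γ φ → C Δ φ) ∧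
  (∀ Γ Δ φ, (∀ δ ∈ Δ, C Γ δ) → C Δ φ → C Γ φ) ∧
  (∀ Γ φ (σ : ℕ → L.Term ℕ), C Γ φ → C (substSet σ Γ) (φ.subst σ))

/-- The left variable inclusion companion `⊢ˡ`. -/
def lrel {L : FirstOrder.Language} (C : ConsRel L) : ConsRel L :=
  fun Γ φ => ∃ Δ, Δ ⊆ Γ ∧ svars Δ ⊆ tvars φ ∧ C Δ φ

/-- `S` is an antitheorem of `C`. -/
def IsAntitheorem {L : FirstOrder.Language} (C : ConsRel L) (S : Set (L.Term ℕ)) : Prop :=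
  ∀ (σ : ℕ → L.Term ℕ) (φ : L.Term ℕ), C (substSet σ S) φ

/-- `C` has no antitheorems. -/
def NoAntitheorems {L : FirstOrder.Language} (C : ConsRel L) : Prop :=
  ¬ ∃ S, IsAntitheorem C S

/-- The right variable inclusion companion `⊢ʳ` of a logic with antitheorem `S`. -/
def rrel {L : FirstOrder.Language} (C : ConsRel L) (S : Set (L.Term ℕ)) : ConsRel L :=
  fun Γ φ => (C Γ φ ∧ tvars φ ⊆ svars Γ) ∨ ∃ σ : ℕ → L.Term ℕ, substSet σ S ⊆ Γ

/-- The right variable inclusion companion `⊢ʳ` of an antitheorem-free logic. -/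
def rrel₀ {L : FirstOrder.Language} (C : ConsRel L) : ConsRel L :=
  fun Γ φ => C Γ φ ∧ tvars φ ⊆ svars Γ

/-- Companion operations. -/
inductive VIOp where
  | left : VIOp
  | right : VIOp

/-- Successive application (left to right) of companion operations
(the right companion in its antitheorem-free form). -/
def applySeq {L : FirstOrder.Language} (C : ConsRel L) : List VIOp → ConsRel L
  | [] => C
  | .left :: s => applySeq (lrel C) s
  | .right :: s => applySeq (rrel₀ C) s

/-- Finitary logics. -/
def IsFinitary {L : FirstOrder.Language} (C : ConsRel L) : Prop :=
  ∀ Γ φ, C Γ φ ↔ ∃ Δ, Δ ⊆ Γ ∧ Δ.Finite ∧ C Δ φ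

/-- `subst2 p u v` is `π(u,v)`: the result of substituting `u` for `x` (variable 0)
and `v` for `y` (variable 1) in the binary term `p = π(x,y)`. -/
def subst2 {L : FirstOrder.Language} (p u v : L.Term ℕ) : L.Term ℕ :=
  p.subst (fun n => if n = 0 then u else if n = 1 then v else Term.var n)

lemma svars_mono {L : FirstOrder.Language} {Δ Γ : Set (L.Term ℕ)} (h : Δ ⊆ Γ) :
    svars Δ ⊆ svars Γ := by
  intro x hx
  simp only [svars, Set.mem_iUnion] at hx ⊢
  obtain ⟨γ, hγ, hxγ⟩ := hx
  exact ⟨γ, h hγ, hxγ⟩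

lemma key {L : FirstOrder.Language} (C : ConsRel L) :
    ∀ (s : List VIOp) (C' : ConsRel L),
      (∀ Γ φ, lrel (rrel₀ C) Γ φ → C' Γ φ) →
      ∀ Γ φ, lrel (rrel₀ C) Γ φ → applySeq C' s Γ φ := by
  intro s
  induction s with
  | nil => intro C' h Γ φ hφ; exact h Γ φ hφ
  | cons op s ih =>
    intro C' h Γ φ hφ
    cases op with
    | left =>
      refine ih (lrel C') (fun Γ φ hφ => ?_) Γ φ hφ
      obtain ⟨Δ, hΔΓ, hv, hc⟩ := hφ
      exact ⟨Δ, hΔΓ, hv, h Δ φ ⟨Δ, subset_rfl, hv, hc⟩⟩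
    | right =>
      refine ih (rrel₀ C') (fun Γ φ hφ => ?_) Γ φ hφ
      obtain ⟨Δ, hΔΓ, hv, hc, hv2⟩ := hφ
      exact ⟨h Γ φ ⟨Δ, hΔΓ, hv, hc, hv2⟩, hv2.trans (svars_mono hΔΓ)⟩

/-- for an antitheorem-free logic, `⊢^{rl} ≤ ⊢^{•}` for every sequence `•`. -/
theorem stmt_6 {L : FirstOrder.Language} (C : ConsRel L) (hC : IsLogic C)
    (hA : NoAntitheorems C) :
    ∀ (s : List VIOp) (Γ : Set (L.Term ℕ)) (φ : L.Term ℕ),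
      applySeq C [.right, .left] Γ φ → applySeq C s Γ φ := by
  intro s Γ φ hφ
  refine key C s C (fun Γ φ hφ => ?_) Γ φ hφ
  obtain ⟨Δ, hΔΓ, _, hc, _⟩ := hφ
  exact hC.2.1 Δ Γ φ hΔΓ hc
end

section
/- Let ⊢ be a logic without antitheorems possessing a binary term π(x,y) that is an l-partition function for ⊢ˡ and an r-partition function for ⊢ʳ, with ⊢ ≠ ⊢ˡ and ⊢ ≠ ⊢ʳ. Then ⊢ˡ is not a sublogic of ⊢ʳ and ⊢ʳ is not a sublogic of ⊢ˡ; specifically π(x,y) ⊢ʳ x but π(x,y) ⊬ˡ x, and x ⊢ˡ π(x,y) but x ⊬ʳ π(x,y). -/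
open FirstOrder Language

lemma tvars_var {L : FirstOrder.Language} (n : ℕ) : tvars (L := L) (Term.var n) = {n} := by
  simp [tvars, Term.varFinset]

lemma svars_singleton {L : FirstOrder.Language} (t : L.Term ℕ) :
    svars ({t} : Set (L.Term ℕ)) = tvars t := by
  simp [svars]

theorem stmt_8' {L : FirstOrder.Language} (C : ConsRel L) (hC : IsLogic C)
    (hA : NoAntitheorems C) (p : L.Term ℕ) (hv : tvars p = {0, 1})
    (h0 : C {Term.var 0, Term.var 1} p)
    (h1 : C {Term.var 0} p) (h2 : C {p} (Term.var 0))
    (hne1 : C ≠ lrel C) (hne2 : C ≠ rrel₀ C) :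
    rrel₀ C {p} (Term.var 0) ∧ ¬ lrel C {p} (Term.var 0) ∧
    lrel C {Term.var 0} p ∧ ¬ rrel₀ C {Term.var 0} p ∧
    ¬ (∀ Γ φ, lrel C Γ φ → rrel₀ C Γ φ) ∧
    ¬ (∀ Γ φ, rrel₀ C Γ φ → lrel C Γ φ) := by
  obtain ⟨hrefl, hmono, hcut, hsub⟩ := hC
  have hempty : ¬ C ∅ (Term.var 0) := by
    intro h
    apply hA
    refine ⟨∅, fun σ φ => ?_⟩
    have := hsub ∅ (Term.var 0) (fun _ => φ) h
    simpa [substSet, Term.subst] using this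
  have A : rrel₀ C {p} (Term.var 0) := by
    refine ⟨h2, ?_⟩
    rw [tvars_var, svars_singleton, hv]
    intro n hn; simp at hn; simp [hn]
  have B : ¬ lrel C {p} (Term.var 0) := by
    rintro ⟨Δ, hΔ, hvars, hCΔ⟩
    rcases Set.subset_singleton_iff_eq.mp hΔ with rfl | rfl
    · exact hempty hCΔ
    · rw [svars_singleton, hv, tvars_var] at hvars
      have : (1 : ℕ) ∈ ({0} : Set ℕ) := hvars (by simp)
      simp at this
  have D : lrel C {Term.var 0} p :=
    ⟨{Term.var 0}, subset_rfl, by rw [svars_singleton, tvars_var, hv]; simp, h1⟩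
  have E : ¬ rrel₀ C {Term.var 0} p := by
    rintro ⟨-, hvars⟩
    rw [hv, svars_singleton, tvars_var] at hvars
    have : (1 : ℕ) ∈ ({0} : Set ℕ) := hvars (by simp)
    simp at this
  exact ⟨A, B, D, E, fun h => E (h _ _ D), fun h => B (h _ _ A)⟩

/-- for an antitheorem-free logic with a partition function `π(x,y)`
(with `⊢ ≠ ⊢ˡ, ⊢ʳ`), neither of `⊢ˡ`, `⊢ʳ` is a sublogic of the other; specifically
`π(x,y) ⊢ʳ x` but `π(x,y) ⊬ˡ x`, and `x ⊢ˡ π(x,y)` but `x ⊬ʳ π(x,y)`. -/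
theorem stmt_8 {L : FirstOrder.Language} (C : ConsRel L) (hC : IsLogic C)
    (hA : NoAntitheorems C) (p : L.Term ℕ) (hv : tvars p = {0, 1})
    (h0 : C {Term.var 0, Term.var 1} p)
    (h1 : C {Term.var 0} p) (h2 : C {p} (Term.var 0))
    (hne1 : C ≠ lrel C) (hne2 : C ≠ rrel₀ C) :
    rrel₀ C {p} (Term.var 0) ∧ ¬ lrel C {p} (Term.var 0) ∧
    lrel C {Term.var 0} p ∧ ¬ rrel₀ C {Term.var 0} p ∧
    ¬ (∀ Γ φ, lrel C Γ φ → rrel₀ C Γ φ) ∧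
    ¬ (∀ Γ φ, rrel₀ C Γ φ → lrel C Γ φ) :=
  stmt_8' C hC hA p hv h0 h1 h2 hne1 hne2
end

section
/- Let ⊢ be a logic without antitheorems. Then ⊢^{rl} = ⊢^{rl•} = ⊢^{lrl•} for every (possibly empty) sequence • of companion operations from {l,r}. In particular ⊢^{rl} = ⊢^{lrl}. -/
open FirstOrder Language

/-- Characterization of `lrel (rrel₀ C)`. -/
lemma lr_iff {L : FirstOrder.Language} (C : ConsRel L) (Γ : Set (L.Term ℕ)) (φ : L.Term ℕ) :
    lrel (rrel₀ C) Γ φ ↔ ∃ Δ, Δ ⊆ Γ ∧ svars Δ = tvars φ ∧ C Δ φ := by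
  constructor
  · rintro ⟨Δ, hΔΓ, hsub, hCΔ, hsup⟩
    exact ⟨Δ, hΔΓ, Set.Subset.antisymm hsub hsup, hCΔ⟩
  · rintro ⟨Δ, hΔΓ, heq, hCΔ⟩
    exact ⟨Δ, hΔΓ, heq.le, hCΔ, heq.ge⟩

lemma lrel_fixed {L : FirstOrder.Language} (C : ConsRel L) :
    lrel (lrel (rrel₀ C)) = lrel (rrel₀ C) := by
  funext Γ φ
  apply propext
  constructor
  · rintro ⟨Δ, hΔΓ, _, hD⟩
    rw [lr_iff] at hD ⊢
    obtain ⟨Δ', h1, h2, h3⟩ := hD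
    exact ⟨Δ', h1.trans hΔΓ, h2, h3⟩
  · intro hD
    rw [lr_iff] at hD
    obtain ⟨Δ, h1, h2, h3⟩ := hD
    refine ⟨Δ, h1, h2.le, ?_⟩
    rw [lr_iff]
    exact ⟨Δ, subset_rfl, h2, h3⟩

lemma rrel_fixed {L : FirstOrder.Language} (C : ConsRel L) :
    rrel₀ (lrel (rrel₀ C)) = lrel (rrel₀ C) := by
  funext Γ φ
  apply propext
  constructor
  · rintro ⟨h, _⟩; exact h
  · intro hD
    refine ⟨hD, ?_⟩
    rw [lr_iff] at hD
    obtain ⟨Δ, h1, h2, _⟩ := hD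
    exact h2 ▸ svars_mono h1

lemma applySeq_fixed {L : FirstOrder.Language} (D : ConsRel L)
    (hl : lrel D = D) (hr : rrel₀ D = D) : ∀ s, applySeq D s = D := by
  intro s
  induction s with
  | nil => rfl
  | cons op s ih =>
    cases op with
    | left => show applySeq (lrel D) s = D; rw [hl]; exact ih
    | right => show applySeq (rrel₀ D) s = D; rw [hr]; exact ih

lemma lrl_eq_rl {L : FirstOrder.Language} (C : ConsRel L)
    (hmono : ∀ Γ Δ φ, Γ ⊆ Δ → C Γ φ → C Δ φ) :
    lrel (rrel₀ (lrel C)) = lrel (rrel₀ C) := by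
  funext Γ φ
  apply propext
  rw [lr_iff (lrel C), lr_iff C]
  constructor
  · rintro ⟨Δ, hΔΓ, heq, Δ', hΔ'Δ, _, hCΔ'⟩
    exact ⟨Δ, hΔΓ, heq, hmono Δ' Δ φ hΔ'Δ hCΔ'⟩
  · rintro ⟨Δ, hΔΓ, heq, hCΔ⟩
    exact ⟨Δ, hΔΓ, heq, Δ, subset_rfl, heq.le, hCΔ⟩

/-- for an antitheorem-free logic, `⊢^{rl} = ⊢^{rl•} = ⊢^{lrl•}` for
every sequence `•`; in particular `⊢^{rl} = ⊢^{lrl}`. -/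
theorem stmt_10 {L : FirstOrder.Language} (C : ConsRel L) (hC : IsLogic C)
    (hA : NoAntitheorems C) :
    ∀ s : List VIOp,
      applySeq C (.right :: .left :: s) = applySeq C [.right, .left] ∧
      applySeq C (.left :: .right :: .left :: s) = applySeq C [.right, .left] := by
  intro s
  have hfix := applySeq_fixed (lrel (rrel₀ C)) (lrel_fixed C) (rrel_fixed C)
  constructor
  · show applySeq (lrel (rrel₀ C)) s = applySeq (lrel (rrel₀ C)) []
    rw [hfix s, hfix List.nil]
  · show applySeq (lrel (rrel₀ (lrel C))) s = applySeq (lrel (rrel₀ C)) []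
    rw [lrl_eq_rl C hC.2.1, hfix s, hfix List.nil]
end

section
/- Let ⊢ be a finitary logic with an antitheorem Σ(x) = {ε₁(x),…,εₙ(x)} and a binary term π(x,y) containing both variables with x ⊢ π(x,y) and π(x,y) ⊢ x. Then ⊢^{rl} is not a sublogic of ⊢^{lr}: specifically, Σ(x) ⊢^{rl} π(x,y) while Σ(x) ⊬^{lr} π(x,y). -/
open FirstOrder Language

lemma subst_var_eq {L : FirstOrder.Language} (t : L.Term ℕ) : t.subst Term.var = t := by
  induction t with
  | var => rfl
  | func f ts ih => simp [Term.subst, ih]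

/-- for a finitary logic with a finite antitheorem `Σ(x)` in the single
variable `x` and a partition function `π(x,y)`, `⊢^{rl}` is not a sublogic of
`⊢^{lr}`: `Σ(x) ⊢^{rl} π(x,y)` while `Σ(x) ⊬^{lr} π(x,y)`. -/
theorem stmt_13 {L : FirstOrder.Language} (C : ConsRel L) (hC : IsLogic C)
    (hfin : IsFinitary C) (S : Set (L.Term ℕ)) (hSfin : S.Finite) (hSne : S.Nonempty)
    (hSv : svars S ⊆ {0}) (hS : IsAntitheorem C S)
    (p : L.Term ℕ) (hv : tvars p = {0, 1})
    (h1 : C {Term.var 0} p) (h2 : C {p} (Term.var 0)) :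
    lrel (rrel C S) S p ∧ ¬ rrel₀ (lrel C) S p ∧
    ¬ (∀ Γ φ, lrel (rrel C S) Γ φ → rrel₀ (lrel C) Γ φ) := by
  have hsub : substSet Term.var S = S := by
    ext t
    constructor
    · rintro ⟨u, hu, rfl⟩; simpa [subst_var_eq] using hu
    · intro ht; exact ⟨t, ht, (subst_var_eq t)⟩
  have h1' : lrel (rrel C S) S p := by
    refine ⟨S, subset_rfl, ?_, Or.inr ⟨Term.var, hsub.le⟩⟩
    refine hSv.trans ?_
    rw [hv]; intro x hx; exact Or.inl hx
  have h2' : ¬ rrel₀ (lrel C) S p := by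
    rintro ⟨-, hsub2⟩
    have : (1 : ℕ) ∈ svars S := hsub2 (by rw [hv]; exact Or.inr rfl)
    have := hSv this
    simp at this
  exact ⟨h1', h2', fun h => h2' (h S p h1')⟩
end

section
/- Let ⊢ be a logic with an antitheorem. Then ⊢^{lrl} = ⊢^{lrlr} = ⊢^{rlrl}, and more generally ⊢^{rlrl•} = ⊢^{lrl•} for every (possibly empty) sequence • of companion operations from {l,r}. -/
open FirstOrder Language

lemma lrl_idem {L : FirstOrder.Language} (C : ConsRel L) :
    lrel (rrel₀ (lrel C)) = rrel₀ (lrel (rrel₀ (lrel C))) := by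
  funext Γ φ
  apply propext
  constructor
  · rintro ⟨Δ, hΔΓ, hsub, hX, hsup⟩
    exact ⟨⟨Δ, hΔΓ, hsub, hX, hsup⟩, hsup.trans (svars_mono hΔΓ)⟩
  · rintro ⟨h, _⟩; exact h

lemma key_eq {L : FirstOrder.Language} (C : ConsRel L) (hC : IsLogic C)
    (S : Set (L.Term ℕ)) (hS : IsAntitheorem C S) :
    lrel (rrel₀ (lrel (rrel C S))) = lrel (rrel₀ (lrel C)) := by
  obtain ⟨_, hmono, _, _⟩ := hC
  funext Γ φ
  apply propext
  constructor
  · rintro ⟨Δ, hΔΓ, hsub, ⟨Δ'', hΔ''Δ, hs'', hR⟩, hsup⟩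
    have hc : C Δ'' φ := by
      rcases hR with ⟨hc, _⟩ | ⟨σ, hσ⟩
      · exact hc
      · exact hmono _ _ _ hσ (hS σ φ)
    exact ⟨Δ, hΔΓ, hsub, ⟨Δ'', hΔ''Δ, hs'', hc⟩, hsup⟩
  · rintro ⟨Δ, hΔΓ, hsub, ⟨Δ', hΔ'Δ, hs', hc⟩, hsup⟩
    exact ⟨Δ, hΔΓ, hsub, ⟨Δ, subset_refl Δ, hsub,
      Or.inl ⟨hmono _ _ _ hΔ'Δ hc, hsup⟩⟩, hsup⟩

/-- for a logic with an antitheorem,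
`⊢^{lrl} = ⊢^{lrlr} = ⊢^{rlrl}`, and more generally `⊢^{rlrl•} = ⊢^{lrl•}` for every
sequence `•` (the first right companion of `⊢` is taken relative to the antitheorem
`S`; all later logics in the sequences are antitheorem-free). -/
theorem stmt_16 {L : FirstOrder.Language} (C : ConsRel L) (hC : IsLogic C)
    (S : Set (L.Term ℕ)) (hS : IsAntitheorem C S) :
    applySeq C [.left, .right, .left] = applySeq C [.left, .right, .left, .right] ∧
    applySeq C [.left, .right, .left] = applySeq (rrel C S) [.left, .right, .left] ∧
    (∀ s : List VIOp,
      applySeq (rrel C S) (.left :: .right :: .left :: s) =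
        applySeq C (.left :: .right :: .left :: s)) := by
  have hk := key_eq C hC S hS
  refine ⟨?_, ?_, ?_⟩
  · show lrel (rrel₀ (lrel C)) = rrel₀ (lrel (rrel₀ (lrel C)))
    exact lrl_idem C
  · show lrel (rrel₀ (lrel C)) = lrel (rrel₀ (lrel (rrel C S)))
    exact hk.symm
  · intro s
    show applySeq (lrel (rrel₀ (lrel (rrel C S)))) s
        = applySeq (lrel (rrel₀ (lrel C))) s
    rw [hk]
end

section
/- Let ⊢ be classical propositional logic, defined by the matrix ⟨B₂, {1}⟩ over the two-element Boolean algebra. Then the left variable inclusion companion ⊢ˡ of classical logic (paraconsistent weak Kleene logic PWK) coincides with the logic of the three-element matrix with universe {0, 1, n}, designated set {1, n}, where n is an absorbing element for all connectives (weak Kleene tables) and {0,1} forms the two-element Boolean algebra. -/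
/-- Formulas of classical propositional logic in `∧, ∨, ¬`. -/
inductive BFm where
  | var : ℕ → BFm
  | and : BFm → BFm → BFm
  | or : BFm → BFm → BFm
  | not : BFm → BFm

/-- Variables of a formula. -/
def bvars : BFm → Set ℕ
  | .var n => {n}
  | .and a b => bvars a ∪ bvars b
  | .or a b => bvars a ∪ bvars b
  | .not a => bvars a

/-- Variables of a set of formulas. -/
def sbvars (Γ : Set BFm) : Set ℕ := ⋃ γ ∈ Γ, bvars γ

/-- Boolean evaluation in the two-element Boolean algebra `B₂`. -/
def evalB (v : ℕ → Bool) : BFm → Bool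
  | .var n => v n
  | .and a b => evalB v a && evalB v b
  | .or a b => evalB v a || evalB v b
  | .not a => ! evalB v a

/-- Weak Kleene lifting of a binary Boolean operation to `{0, 1, n}`
(modelled as `Option Bool`, with `none` playing the role of the absorbing `n`). -/
def wk2 (f : Bool → Bool → Bool) : Option Bool → Option Bool → Option Bool
  | some a, some b => some (f a b)
  | _, _ => none

/-- Evaluation in the weak Kleene algebra `WK`: `n` (i.e. `none`) is absorbing. -/
def evalW (v : ℕ → Option Bool) : BFm → Option Bool
  | .var n => v n
  | .and a b => wk2 (· && ·) (evalW v a) (evalW v b)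
  | .or a b => wk2 (· || ·) (evalW v a) (evalW v b)
  | .not a => Option.map (!·) (evalW v a)

/-- Classical logic: the logic of the matrix `⟨B₂, {1}⟩`. -/
def CL (Γ : Set BFm) (φ : BFm) : Prop :=
  ∀ v : ℕ → Bool, (∀ γ ∈ Γ, evalB v γ = true) → evalB v φ = true

/-- The left variable inclusion companion of classical logic (PWK). -/
def CLleft (Γ : Set BFm) (φ : BFm) : Prop :=
  ∃ Δ, Δ ⊆ Γ ∧ sbvars Δ ⊆ bvars φ ∧ CL Δ φ

lemma wk2_none_left (f : Bool → Bool → Bool) (b : Option Bool) : wk2 f none b = none := by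
  cases b <;> rfl

lemma wk2_none_right (f : Bool → Bool → Bool) (a : Option Bool) : wk2 f a none = none := by
  cases a <;> rfl

lemma evalW_some (v : ℕ → Option Bool) (u : ℕ → Bool) :
    ∀ ψ, (∀ x ∈ bvars ψ, v x = some (u x)) → evalW v ψ = some (evalB u ψ) := by
  intro ψ
  induction ψ with
  | var n => intro h; exact h n rfl
  | and a b iha ihb =>
      intro h
      rw [evalW, iha (fun x hx => h x (Set.mem_union_left _ hx)),
        ihb (fun x hx => h x (Set.mem_union_right _ hx))]; rfl
  | or a b iha ihb =>
      intro h
      rw [evalW, iha (fun x hx => h x (Set.mem_union_left _ hx)),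
        ihb (fun x hx => h x (Set.mem_union_right _ hx))]; rfl
  | not a iha =>
      intro h
      rw [evalW, iha h]; rfl

lemma evalW_none (v : ℕ → Option Bool) (x : ℕ) :
    ∀ ψ, x ∈ bvars ψ → v x = none → evalW v ψ = none := by
  intro ψ
  induction ψ with
  | var n => intro hx hv; cases hx; exact hv
  | and a b iha ihb =>
      intro hx hv
      rcases hx with hx | hx
      · rw [evalW, iha hx hv, wk2_none_left]
      · rw [evalW, ihb hx hv, wk2_none_right]
  | or a b iha ihb =>
      intro hx hv
      rcases hx with hx | hx
      · rw [evalW, iha hx hv, wk2_none_left]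
      · rw [evalW, ihb hx hv, wk2_none_right]
  | not a iha =>
      intro hx hv
      rw [evalW, iha hx hv]; rfl

/-- `⊢ˡ_CL` (PWK) coincides with the logic of the matrix
`⟨WK, {1, n}⟩` over the weak Kleene algebra. -/
theorem stmt_18 :
    ∀ (Γ : Set BFm) (φ : BFm),
      CLleft Γ φ ↔
        ∀ v : ℕ → Option Bool,
          (∀ γ ∈ Γ, evalW v γ = some true ∨ evalW v γ = none) →
          (evalW v φ = some true ∨ evalW v φ = none) := by
  intro Γ φ
  constructor
  · rintro ⟨Δ, hΔΓ, hvars, hCL⟩ v hv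
    by_cases hall : ∀ x ∈ bvars φ, (v x).isSome
    · left
      set u : ℕ → Bool := fun x => (v x).getD false with hu
      have hsome : ∀ x ∈ bvars φ, v x = some (u x) := by
        intro x hx
        rcases Option.isSome_iff_exists.mp (hall x hx) with ⟨b, hb⟩
        simp [hu, hb]
      have hΔtrue : ∀ δ ∈ Δ, evalB u δ = true := by
        intro δ hδ
        have hsub : bvars δ ⊆ bvars φ := by
          intro x hx
          exact hvars (Set.mem_biUnion hδ hx)
        have := evalW_some v u δ (fun x hx => hsome x (hsub hx))
        rcases hv δ (hΔΓ hδ) with h1 | h1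
        · rw [this] at h1; exact Option.some_injective _ h1
        · rw [this] at h1; exact absurd h1 (by simp)
      rw [evalW_some v u φ hsome, hCL u hΔtrue]
    · right
      push_neg at hall
      obtain ⟨x, hx, hnone⟩ := hall
      exact evalW_none v x φ hx (Option.not_isSome_iff_eq_none.mp hnone)
  · intro hsem
    refine ⟨{γ ∈ Γ | bvars γ ⊆ bvars φ}, fun γ hγ => hγ.1, ?_, ?_⟩
    · intro x hx
      rcases Set.mem_iUnion.mp hx with ⟨γ, hγ⟩
      rcases Set.mem_iUnion.mp hγ with ⟨hγΔ, hxγ⟩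
      exact hγΔ.2 hxγ
    · intro u hu
      classical
      set v : ℕ → Option Bool := fun x => if x ∈ bvars φ then some (u x) else none with hv
      have hdes : ∀ γ ∈ Γ, evalW v γ = some true ∨ evalW v γ = none := by
        intro γ hγ
        by_cases hsub : bvars γ ⊆ bvars φ
        · left
          rw [evalW_some v u γ (fun x hx => by simp [hv, hsub hx])]
          rw [hu γ ⟨hγ, hsub⟩]
        · right
          obtain ⟨x, hxγ, hxφ⟩ := Set.not_subset.mp hsub
          exact evalW_none v x γ hxγ (by simp [hv, hxφ])
      have hφsome : ∀ x ∈ bvars φ, v x = some (u x) := fun x hx => by simp [hv, hx]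
      rcases hsem v hdes with h | h
      · rw [evalW_some v u φ hφsome] at h
        exact Option.some_injective _ h
      · rw [evalW_some v u φ hφsome] at h
        exact absurd h (by simp)
end
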